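/- arXiv:1806.01122 — 4 statements merged into one kernel-verified Lean document; each statement's English description precedes it below -/
import Mathlib

section
/- Let z ∈ ℂ with z ∉ (-∞,0] and z ≠ 1, and let a ∈ ℂ. Then the function x ↦ f(z,x,a) is analytic in a neighborhood of x = 0 and for every n ≥ 0 its n-th Maclaurin coefficient satisfies C_n(z,a) = c_n(z) − z^{1−a} p_n(z,a), where p_n(z,a) := Σ_{k=0}^n c_{n−k}(z) (a−1)^k / k! and z^{1−a} is the principal power. (In particular, p_n(z,a) is a polynomial of degree n in a.) -/
/-!
Near `x = 0` the point `z e^{-x}` stays off the branch cut and away from `1`, and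
`log (z e^{-x}) = log z - x`; hence `(z e^{-x})^{1-a} = z^{1-a} e^{(a-1)x}` and
`f(z,x,a) = c(x) - z^{1-a} e^{(a-1)x} c(x)` with `c(x) = 1/(1 - z e^{-x})` analytic at `0`.
The coefficients of `e^{(a-1)x}` are `(a-1)^k/k!`, and Leibniz's rule turns the product into
the Cauchy product `p_n(z,a)`.
-/

open scoped BigOperators

/-- `f(z,x,a) = (1 - (z e^{-x})^{1-a})/(1 - z e^{-x})`, with the removable singularity
(where `z e^{-x} = 1`) filled by the limiting value `1 - a`.  Principal powers. -/
noncomputable def lerchF (z a x : ℂ) : ℂ :=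
  if z * Complex.exp (-x) = 1 then 1 - a
  else (1 - (z * Complex.exp (-x)) ^ ((1 : ℂ) - a)) / (1 - z * Complex.exp (-x))

/-- The `n`-th Maclaurin (Taylor at `0`) coefficient of `g`. -/
noncomputable def taylorCoeff (g : ℂ → ℂ) (n : ℕ) : ℂ :=
  iteratedDeriv n g 0 / (n.factorial : ℂ)

/-- `c_n(z)`: the `n`-th Maclaurin coefficient of `x ↦ 1/(1 - z e^{-x})`. -/
noncomputable def cCoeff (z : ℂ) (n : ℕ) : ℂ :=
  taylorCoeff (fun x => 1 / (1 - z * Complex.exp (-x))) n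

/-- `p_n(z,a) = ∑_{k=0}^n c_{n-k}(z) (a-1)^k / k!`. -/
noncomputable def pPoly (z a : ℂ) (n : ℕ) : ℂ :=
  ∑ k ∈ Finset.range (n + 1), cCoeff z (n - k) * (a - 1) ^ k / (k.factorial : ℂ)

open Complex Filter Topology

section taylorCoeff

variable {f g : ℂ → ℂ} {n : ℕ}

lemma taylorCoeff_congr (h : f =ᶠ[𝓝 0] g) (n : ℕ) : taylorCoeff f n = taylorCoeff g n := by
  rw [taylorCoeff, taylorCoeff, h.iteratedDeriv_eq]

lemma taylorCoeff_sub (hf : ContDiffAt ℂ n f 0) (hg : ContDiffAt ℂ n g 0) :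
    taylorCoeff (fun x => f x - g x) n = taylorCoeff f n - taylorCoeff g n := by
  rw [taylorCoeff, taylorCoeff, taylorCoeff, iteratedDeriv_fun_sub hf hg, sub_div]

lemma taylorCoeff_const_mul (c : ℂ) (f : ℂ → ℂ) (n : ℕ) :
    taylorCoeff (fun x => c * f x) n = c * taylorCoeff f n := by
  rw [taylorCoeff, taylorCoeff, iteratedDeriv_const_mul_field, mul_div_assoc]

lemma taylorCoeff_mul (hf : ContDiffAt ℂ n f 0) (hg : ContDiffAt ℂ n g 0) :
    taylorCoeff (fun x => f x * g x) n =
      ∑ k ∈ Finset.range (n + 1), taylorCoeff f k * taylorCoeff g (n - k) := by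
  rw [taylorCoeff, iteratedDeriv_fun_mul hf hg, Finset.sum_div]
  refine Finset.sum_congr rfl fun k hk => ?_
  have hkn : k ≤ n := Nat.lt_succ_iff.mp (Finset.mem_range.mp hk)
  have hfact : (n.choose k : ℂ) * k.factorial * (n - k).factorial = n.factorial := by
    exact_mod_cast Nat.choose_mul_factorial_mul_factorial hkn
  have hchoose : (n.choose k : ℂ) ≠ 0 := by exact_mod_cast (Nat.choose_pos hkn).ne'
  rw [taylorCoeff, taylorCoeff, ← hfact]
  field_simp

lemma taylorCoeff_cexp_const_mul (b : ℂ) (n : ℕ) :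
    taylorCoeff (fun x => exp (b * x)) n = b ^ n / n.factorial := by
  simp [taylorCoeff]

end taylorCoeff

lemma mem_slitPlane_of_forall_ne_ofReal {z : ℂ} (hz : ∀ x : ℝ, x ≤ 0 → z ≠ (x : ℂ)) :
    z ∈ slitPlane := by
  rw [mem_slitPlane_iff, or_iff_not_imp_left, not_lt]
  intro hre him
  exact hz z.re hre (ext rfl (by simpa using him))

/-- Near `x = 0`, `Im (log z - x) = arg z - Im x` stays in `(-π, π)`, so that
`log (z e^{-x}) = log z - x`. -/
lemma eventually_cpow_mul_exp_neg {z : ℂ} (hz : z ∈ slitPlane) (s : ℂ) :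
    ∀ᶠ x in 𝓝 0, (z * exp (-x)) ^ s = z ^ s * exp (-s * x) := by
  have hz0 : z ≠ 0 := slitPlane_ne_zero hz
  have him : (log z - 0).im ∈ Set.Ioo (-Real.pi) Real.pi := by
    simpa [log_im] using ⟨neg_pi_lt_arg z, (arg_le_pi z).lt_of_ne (slitPlane_arg_ne_pi hz)⟩
  have hopen : IsOpen {x : ℂ | (log z - x).im ∈ Set.Ioo (-Real.pi) Real.pi} :=
    isOpen_Ioo.preimage (by fun_prop)
  filter_upwards [hopen.mem_nhds him] with x hx
  have hexp : z * exp (-x) = exp (log z - x) := by rw [sub_eq_add_neg, exp_add, exp_log hz0]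
  have hlog : log (z * exp (-x)) = log z - x := by rw [hexp, log_exp hx.1 hx.2.le]
  rw [cpow_def_of_ne_zero (mul_ne_zero hz0 (exp_ne_zero _)), hlog,
    cpow_def_of_ne_zero hz0, ← exp_add]
  ring_nf

lemma lerchF_eventuallyEq {z : ℂ} (hz : z ∈ slitPlane) (hz1 : z ≠ 1) (a : ℂ) :
    lerchF z a =ᶠ[𝓝 0] fun x => 1 / (1 - z * exp (-x)) -
      z ^ (1 - a) * (exp ((a - 1) * x) * (1 / (1 - z * exp (-x)))) := by
  have hne : ∀ᶠ x in 𝓝 0, z * exp (-x) ≠ 1 :=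
    (by fun_prop : ContinuousAt (fun x : ℂ => z * exp (-x)) 0).eventually_ne (by simpa using hz1)
  filter_upwards [hne, eventually_cpow_mul_exp_neg hz (1 - a)] with x hx hpow
  rw [lerchF, if_neg hx, hpow]
  ring_nf

theorem stmt0 (z a : ℂ) (hz : ∀ x : ℝ, x ≤ 0 → z ≠ (x : ℂ)) (hz1 : z ≠ 1) :
    AnalyticAt ℂ (lerchF z a) 0 ∧
      ∀ n : ℕ, taylorCoeff (lerchF z a) n
        = cCoeff z n - z ^ ((1 : ℂ) - a) * pPoly z a n := by
  have hf := lerchF_eventuallyEq (mem_slitPlane_of_forall_ne_ofReal hz) hz1 a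
  have hc : AnalyticAt ℂ (fun x => 1 / (1 - z * exp (-x))) 0 :=
    analyticAt_const.div (by fun_prop) (by simpa [sub_eq_zero] using hz1.symm)
  have he : AnalyticAt ℂ (fun x => exp ((a - 1) * x)) 0 := by fun_prop
  have hw : AnalyticAt ℂ
      (fun x => z ^ (1 - a) * (exp ((a - 1) * x) * (1 / (1 - z * exp (-x))))) 0 := by fun_prop
  refine ⟨(hc.sub hw).congr hf.symm, fun n => ?_⟩
  rw [taylorCoeff_congr hf, taylorCoeff_sub hc.contDiffAt hw.contDiffAt, taylorCoeff_const_mul,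
    taylorCoeff_mul he.contDiffAt hc.contDiffAt, pPoly]
  simp only [taylorCoeff_cexp_const_mul, cCoeff]
  congr 2
  refine Finset.sum_congr rfl fun k _ => ?_
  ring
end

section
/- Let z ∈ ℂ with 0 < |z| < 1 and z ∉ (−1,0], let a ∈ ℂ with Re a > 0 and s ∈ ℂ with Re s > 0. Then Σ_{n=0}^∞ z^n/(a+n)^s − z^{−a} Σ_{n=1}^∞ z^n/n^s = (1/Γ(s)) ∫_0^∞ x^{s−1} e^{−a x} f(z,x,a) dx, where both series converge absolutely, all complex powers are principal, Γ is the Gamma function, and the integral converges absolutely. -/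
open scoped BigOperators

/-!
Expanding `1 / (1 - z e^{-x})` as a geometric series turns
`∫₀^∞ x^{s-1} e^{-ax} / (1 - z e^{-x}) dx` termwise into
`∑ zⁿ ∫₀^∞ x^{s-1} e^{-(a+n)x} dx = Γ(s) Φ(z,s,a)`; since `|z| < 1` the integrals of the absolute
values of the terms are dominated by a geometric series, which justifies the interchange and gives
absolute convergence. The Gamma integral `∫₀^∞ x^{s-1} e^{-wx} dx = Γ(s) / w^s` for complex `w`
with `Re w > 0` follows from the case of real `w` by the identity theorem. Finally
`e^{-ax} f(z,x,a) = (e^{-ax} - z^{1-a} e^{-x}) / (1 - z e^{-x})`, so the integral of the theorem is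
the difference of the representations of `Φ(z,s,a)` and of `z^{1-a} Φ(z,s,1) = z^{-a} Li_s(z)`.
-/

open Set MeasureTheory Complex Filter Topology

lemma Real.integrableOn_rpow_mul_exp_neg_mul {c r : ℝ} (hc : -1 < c) (hr : 0 < r) :
    IntegrableOn (fun x : ℝ => x ^ c * Real.exp (-(r * x))) (Ioi 0) := by
  simpa using integrableOn_rpow_mul_exp_neg_mul_rpow (p := 1) hc one_pos hr

namespace Complex

lemma norm_cpow_mul_exp_neg_mul (s w : ℂ) {x : ℝ} (hx : 0 < x) :
    ‖(x : ℂ) ^ (s - 1) * exp (-(w * x))‖ = x ^ (s.re - 1) * Real.exp (-(w.re * x)) := by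
  simp [norm_exp, norm_cpow_eq_rpow_re_of_pos hx]

lemma aestronglyMeasurable_cpow_mul_exp_neg_mul (s w : ℂ) :
    AEStronglyMeasurable (fun x : ℝ => (x : ℂ) ^ (s - 1) * exp (-(w * x)))
      (volume.restrict (Ioi 0)) :=
  ContinuousOn.aestronglyMeasurable (fun x hx => ((continuousAt_ofReal_cpow_const _ _
    (Or.inr (ne_of_gt hx))).mul (by fun_prop)).continuousWithinAt) measurableSet_Ioi

lemma integrableOn_cpow_mul_exp_neg_mul {s w : ℂ} (hs : 0 < s.re) (hw : 0 < w.re) :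
    IntegrableOn (fun x : ℝ => (x : ℂ) ^ (s - 1) * exp (-(w * x))) (Ioi 0) :=
  (Real.integrableOn_rpow_mul_exp_neg_mul (by linarith) hw).mono'
    (aestronglyMeasurable_cpow_mul_exp_neg_mul s w) <| (ae_restrict_iff' measurableSet_Ioi).mpr
      (Eventually.of_forall fun _ hx => (norm_cpow_mul_exp_neg_mul s w hx).le)

lemma differentiableOn_integral_cpow_mul_exp_neg_mul {s : ℂ} (hs : 0 < s.re) :
    DifferentiableOn ℂ (fun w : ℂ => ∫ x in Ioi (0 : ℝ), (x : ℂ) ^ (s - 1) * exp (-(w * x)))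
      {w | 0 < w.re} := by
  intro w₀ (hw₀ : 0 < w₀.re)
  set ε := w₀.re / 2
  have hε : 0 < ε := half_pos hw₀
  have hnhds : {w : ℂ | ε < w.re} ∈ 𝓝 w₀ :=
    (isOpen_lt continuous_const continuous_re).mem_nhds (half_lt_self hw₀)
  -- `∂/∂w (x^(s-1) e^{-wx}) = -x^s e^{-wx}`, which is again of the same shape with `s + 1`
  have hderiv : ∀ x ∈ Ioi (0 : ℝ), ∀ w : ℂ,
      HasDerivAt (fun w : ℂ => (x : ℂ) ^ (s - 1) * exp (-(w * x)))
        (-((x : ℂ) ^ (s + 1 - 1) * exp (-(w * x)))) w := by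
    intro x (hx : 0 < x) w
    refine ((((hasDerivAt_id w).mul_const (x : ℂ)).neg.cexp).const_mul _).congr_deriv ?_
    rw [add_sub_right_comm, cpow_add _ _ (ofReal_ne_zero.mpr hx.ne'), cpow_one, Pi.neg_apply, id]
    ring
  have hs' : 0 < (s + 1).re := by simp only [add_re, one_re]; linarith
  have key := hasDerivAt_integral_of_dominated_loc_of_deriv_le (μ := volume.restrict (Ioi 0))
    (F := fun w x => (x : ℂ) ^ (s - 1) * exp (-(w * x)))
    (F' := fun w x => -((x : ℂ) ^ (s + 1 - 1) * exp (-(w * x))))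
    (bound := fun x => x ^ ((s + 1).re - 1) * Real.exp (-(ε * x))) hnhds
    (Eventually.of_forall fun w => ?_) (integrableOn_cpow_mul_exp_neg_mul hs hw₀)
    (integrableOn_cpow_mul_exp_neg_mul hs' hw₀).neg.aestronglyMeasurable ?_ ?_
    ((ae_restrict_iff' measurableSet_Ioi).mpr
      (Eventually.of_forall fun x hx w _ => hderiv x hx w))
  · exact key.2.differentiableAt.differentiableWithinAt
  · exact aestronglyMeasurable_cpow_mul_exp_neg_mul s w
  · refine (ae_restrict_iff' measurableSet_Ioi).mpr
      (Eventually.of_forall fun x (hx : 0 < x) w (hw : ε < w.re) => ?_)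
    rw [norm_neg, norm_cpow_mul_exp_neg_mul _ _ hx]
    gcongr
  · exact Real.integrableOn_rpow_mul_exp_neg_mul (by linarith) hε

lemma integral_cpow_mul_exp_neg_cmul_Ioi {s w : ℂ} (hs : 0 < s.re) (hw : 0 < w.re) :
    ∫ x in Ioi (0 : ℝ), (x : ℂ) ^ (s - 1) * exp (-(w * x)) = Gamma s / w ^ s := by
  have hopen : IsOpen {w : ℂ | 0 < w.re} := isOpen_lt continuous_const continuous_re
  have hG : DifferentiableOn ℂ (fun w : ℂ => Gamma s / w ^ s) {w | 0 < w.re} := by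
    intro w (hw : 0 < w.re)
    have hw0 : w ≠ 0 := fun h => by simp [h] at hw
    exact ((differentiableAt_const _).div (differentiableAt_id.cpow (differentiableAt_const s)
      (Or.inl hw)) (by simp [cpow_eq_zero_iff, hw0])).differentiableWithinAt
  have hreal : ∀ r : ℝ, 0 < r →
      ∫ x in Ioi (0 : ℝ), (x : ℂ) ^ (s - 1) * exp (-(r * x)) = Gamma s / (r : ℂ) ^ s := by
    intro r hr
    rw [integral_cpow_mul_exp_neg_mul_Ioi hs hr, one_div, inv_cpow_ofReal_nonneg hr.le,
      div_eq_mul_inv, mul_comm]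
  have hfreq : ∃ᶠ w in 𝓝[≠] (1 : ℂ), (∫ x in Ioi (0 : ℝ), (x : ℂ) ^ (s - 1) * exp (-(w * x)))
      = Gamma s / w ^ s := by
    have hofReal : Tendsto ((↑) : ℝ → ℂ) (𝓝[>] 1) (𝓝[≠] 1) :=
      tendsto_nhdsWithin_of_tendsto_nhds_of_eventually_within _
        ((continuous_ofReal.tendsto' 1 1 ofReal_one).mono_left nhdsWithin_le_nhds)
        (eventually_nhdsWithin_of_forall fun r (hr : 1 < r) => by simpa using hr.ne')
    exact hofReal.frequently (eventually_nhdsWithin_of_forall (s := Ioi 1) fun r hr =>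
      hreal r (zero_lt_one.trans hr)).frequently
  exact ((differentiableOn_integral_cpow_mul_exp_neg_mul hs).analyticOnNhd hopen
    ).eqOn_of_preconnected_of_frequently_eq (hG.analyticOnNhd hopen)
      (convex_halfSpace_re_gt 0).isPreconnected (by simp) hfreq hw

lemma norm_mul_exp_neg_ofReal_le (z : ℂ) {x : ℝ} (hx : 0 ≤ x) : ‖z * exp (-x)‖ ≤ ‖z‖ := by
  rw [norm_mul, norm_exp, neg_re, ofReal_re]
  exact mul_le_of_le_one_right (norm_nonneg z) (Real.exp_le_one_iff.mpr (neg_nonpos.mpr hx))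

lemma re_add_natCast_pos {a : ℂ} (ha : 0 < a.re) (n : ℕ) : 0 < (a + n).re := by
  rw [add_re, natCast_re]
  positivity

lemma mul_exp_neg_ofReal_cpow {z : ℂ} (hz : z ≠ 0) (w : ℂ) (x : ℝ) :
    (z * exp (-x)) ^ w = z ^ w * exp (-(x * w)) := by
  rw [← ofReal_neg, ← ofReal_exp, cpow_def_of_ne_zero hz, cpow_def_of_ne_zero
    (mul_ne_zero hz (ofReal_ne_zero.mpr (Real.exp_pos _).ne')), log_mul_ofReal _ (Real.exp_pos _)
    _ hz, Real.log_exp, ← exp_add]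
  push_cast
  ring_nf

section Lerch

variable {z a s : ℂ}

lemma hasSum_lerch_integrand (hz : ‖z‖ < 1) (a s : ℂ) {x : ℝ} (hx : 0 ≤ x) :
    HasSum (fun n : ℕ => z ^ n * ((x : ℂ) ^ (s - 1) * exp (-((a + n) * x))))
      ((x : ℂ) ^ (s - 1) * exp (-(a * x)) / (1 - z * exp (-x))) := by
  have hq := hasSum_geometric_of_norm_lt_one ((norm_mul_exp_neg_ofReal_le z hx).trans_lt hz)
  rw [div_eq_mul_inv]
  refine (hq.mul_left ((x : ℂ) ^ (s - 1) * exp (-(a * x)))).congr_fun fun n => ?_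
  rw [mul_pow, ← exp_nat_mul, add_mul, neg_add, exp_add]
  ring_nf

lemma integrableOn_lerch_integrand (hz : ‖z‖ < 1) (ha : 0 < a.re) (hs : 0 < s.re) :
    IntegrableOn (fun x : ℝ => (x : ℂ) ^ (s - 1) * exp (-(a * x)) / (1 - z * exp (-x)))
      (Ioi 0) := by
  simp_rw [div_eq_mul_inv]
  refine (integrableOn_cpow_mul_exp_neg_mul hs ha).mul_bdd (c := (1 - ‖z‖)⁻¹)
    (by fun_prop) ((ae_restrict_iff' measurableSet_Ioi).mpr (Eventually.of_forall fun x hx => ?_))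
  have hq := norm_mul_exp_neg_ofReal_le z (le_of_lt hx)
  rw [norm_inv]
  refine inv_anti₀ (by linarith) ?_
  calc 1 - ‖z‖ ≤ ‖(1 : ℂ)‖ - ‖z * exp (-x)‖ := by rw [norm_one]; linarith
    _ ≤ ‖1 - z * exp (-x)‖ := norm_sub_norm_le _ _

lemma integral_lerch_term (hs : 0 < s.re) (ha : 0 < a.re) (n : ℕ) :
    ∫ x in Ioi (0 : ℝ), z ^ n * ((x : ℂ) ^ (s - 1) * exp (-((a + n) * x)))
      = Gamma s * (z ^ n / (a + n) ^ s) := by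
  rw [integral_const_mul, integral_cpow_mul_exp_neg_cmul_Ioi hs (re_add_natCast_pos ha n)]
  ring

lemma summable_integral_norm_lerch_term (hz : ‖z‖ < 1) (ha : 0 < a.re) (hs : 0 < s.re) :
    Summable fun n : ℕ =>
      ∫ x in Ioi (0 : ℝ), ‖z ^ n * ((x : ℂ) ^ (s - 1) * exp (-((a + n) * x)))‖ := by
  refine ((summable_geometric_of_lt_one (norm_nonneg z) hz).mul_right
    (∫ x in Ioi (0 : ℝ), x ^ (s.re - 1) * Real.exp (-(a.re * x)))).of_nonneg_of_le
    (fun n => integral_nonneg fun x => norm_nonneg _) fun n => ?_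
  rw [← integral_const_mul]
  refine setIntegral_mono_on
    (((integrableOn_cpow_mul_exp_neg_mul hs (re_add_natCast_pos ha n)).const_mul (z ^ n)).norm)
    ((Real.integrableOn_rpow_mul_exp_neg_mul (by linarith) ha).const_mul _)
    measurableSet_Ioi fun x (hx : 0 < x) => ?_
  have hre : a.re ≤ (a + n).re := by simp
  rw [norm_mul, norm_pow, norm_cpow_mul_exp_neg_mul _ _ hx]
  gcongr

lemma hasSum_lerch_integral (hz : ‖z‖ < 1) (ha : 0 < a.re) (hs : 0 < s.re) :
    HasSum (fun n : ℕ => z ^ n / (a + n) ^ s) ((Gamma s)⁻¹ *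
      ∫ x in Ioi (0 : ℝ), (x : ℂ) ^ (s - 1) * exp (-(a * x)) / (1 - z * exp (-x))) := by
  have h := hasSum_integral_of_summable_integral_norm
    (fun n => (integrableOn_cpow_mul_exp_neg_mul hs (re_add_natCast_pos ha n)).const_mul (z ^ n))
    (summable_integral_norm_lerch_term hz ha hs)
  simp_rw [integral_lerch_term hs ha] at h
  rw [setIntegral_congr_fun measurableSet_Ioi
    fun x (hx : 0 < x) => (hasSum_lerch_integrand hz a s hx.le).tsum_eq] at h
  simpa [inv_mul_cancel_left₀ (Gamma_ne_zero_of_re_pos hs)] using h.mul_left (Gamma s)⁻¹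

lemma summable_norm_lerch (hz : ‖z‖ < 1) (ha : 0 < a.re) (hs : 0 < s.re) :
    Summable fun n : ℕ => ‖z ^ n / (a + n) ^ s‖ := by
  refine (summable_mul_left_iff (norm_ne_zero_iff.mpr (Gamma_ne_zero_of_re_pos hs))).mp
    ((summable_integral_norm_lerch_term hz ha hs).of_nonneg_of_le (fun n => by positivity)
      fun n => ?_)
  rw [← norm_mul, ← integral_lerch_term hs ha]
  exact norm_integral_le_integral_norm _

end Lerch

end Complex

lemma exp_neg_mul_mul_lerchF {z : ℂ} (hz : z ≠ 0) (a : ℂ) {x : ℝ} (hq : z * exp (-x) ≠ 1) :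
    exp (-a * x) * lerchF z a x
      = (exp (-(a * x)) - z ^ (1 - a) * exp (-x)) / (1 - z * exp (-x)) := by
  rw [lerchF, if_neg hq, mul_exp_neg_ofReal_cpow hz, mul_div_assoc', mul_sub, mul_one,
    mul_left_comm, ← exp_add]
  ring_nf

theorem stmt4_general (z a s : ℂ) (hz0 : 0 < ‖z‖) (hz1 : ‖z‖ < 1)
    (ha : 0 < a.re) (hs : 0 < s.re) :
    Summable (fun n : ℕ => ‖z ^ n / (a + (n : ℂ)) ^ s‖) ∧
    Summable (fun n : ℕ => ‖z ^ (n + 1) / ((n : ℂ) + 1) ^ s‖) ∧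
    MeasureTheory.IntegrableOn
      (fun x : ℝ => (x : ℂ) ^ (s - 1) * Complex.exp (-a * (x : ℂ)) * lerchF z a (x : ℂ))
      (Set.Ioi 0) ∧
    (∑' n : ℕ, z ^ n / (a + (n : ℂ)) ^ s)
        - z ^ (-a) * (∑' n : ℕ, z ^ (n + 1) / ((n : ℂ) + 1) ^ s)
      = (1 / Complex.Gamma s) *
          ∫ x in Set.Ioi (0 : ℝ),
            (x : ℂ) ^ (s - 1) * Complex.exp (-a * (x : ℂ)) * lerchF z a (x : ℂ) := by
  have hz : z ≠ 0 := norm_pos_iff.mp hz0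
  have h1 : (0 : ℝ) < (1 : ℂ).re := by simp
  have hshift (n : ℕ) : z ^ (n + 1) / ((n : ℂ) + 1) ^ s = z * (z ^ n / (1 + n) ^ s) := by
    rw [pow_succ', add_comm, mul_div_assoc]
  have hintegrand : ∀ x ∈ Ioi (0 : ℝ),
      (x : ℂ) ^ (s - 1) * exp (-a * x) * lerchF z a x
        = (x : ℂ) ^ (s - 1) * exp (-(a * x)) / (1 - z * exp (-x))
          - z ^ (-a) * (z * ((x : ℂ) ^ (s - 1) * exp (-(1 * x)) / (1 - z * exp (-x)))) := by
    intro x (hx : 0 < x)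
    have hq : z * exp (-x) ≠ 1 := fun h => by
      simpa [h] using (norm_mul_exp_neg_ofReal_le z hx.le).trans_lt hz1
    rw [mul_assoc, exp_neg_mul_mul_lerchF hz a hq, show 1 - a = -a + 1 by ring, cpow_add _ _ hz,
      cpow_one, one_mul]
    ring
  have hIa := integrableOn_lerch_integrand hz1 ha hs
  have hI1 := integrableOn_lerch_integrand hz1 h1 hs
  refine ⟨summable_norm_lerch hz1 ha hs, ?_, ?_, ?_⟩
  · simpa [hshift] using (summable_norm_lerch hz1 h1 hs).mul_left ‖z‖
  · exact (hIa.sub ((hI1.const_mul z).const_mul _)).congr_fun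
      (fun x hx => (hintegrand x hx).symm) measurableSet_Ioi
  · rw [(hasSum_lerch_integral hz1 ha hs).tsum_eq, tsum_congr hshift, tsum_mul_left,
      (hasSum_lerch_integral hz1 h1 hs).tsum_eq,
      setIntegral_congr_fun measurableSet_Ioi hintegrand,
      integral_sub hIa ((hI1.const_mul z).const_mul _), integral_const_mul, integral_const_mul]
    ring

theorem stmt4 (z a s : ℂ) (hz0 : 0 < ‖z‖) (hz1 : ‖z‖ < 1)
    (hz2 : ∀ x : ℝ, x ≤ 0 → z ≠ (x : ℂ)) (ha : 0 < a.re) (hs : 0 < s.re) :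
    Summable (fun n : ℕ => ‖z ^ n / (a + (n : ℂ)) ^ s‖) ∧
    Summable (fun n : ℕ => ‖z ^ (n + 1) / ((n : ℂ) + 1) ^ s‖) ∧
    MeasureTheory.IntegrableOn
      (fun x : ℝ => (x : ℂ) ^ (s - 1) * Complex.exp (-a * (x : ℂ)) * lerchF z a (x : ℂ))
      (Set.Ioi 0) ∧
    (∑' n : ℕ, z ^ n / (a + (n : ℂ)) ^ s)
        - z ^ (-a) * (∑' n : ℕ, z ^ (n + 1) / ((n : ℂ) + 1) ^ s)
      = (1 / Complex.Gamma s) *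
          ∫ x in Set.Ioi (0 : ℝ),
            (x : ℂ) ^ (s - 1) * Complex.exp (-a * (x : ℂ)) * lerchF z a (x : ℂ) :=
  stmt4_general z a s hz0 hz1 ha hs
end

section
/- Let z ∈ ℝ with z ≥ 1, let m ∈ ℕ with m ≥ 2, and let s ∈ ℂ with Re s > 0. Then Σ_{k=1}^{m−1} z^k / k^s = z^m Σ_{n=0}^∞ ( (1/n!) Σ_{k=1}^{m−1} k^n z^{−k} ) (s)_n / m^{n+s}, where the series over n converges absolutely; here k^s = exp(s log k) and m^{n+s} = m^n exp(s log m). -/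
/-! Expanding each $(m-k)^{-s} = m^{-s}(1-k/m)^{-s}$ in the binomial series and summing over $k$
gives $\sum_k z^{-k}(m-k)^{-s}$; multiplying by $z^m$ and reflecting $k \mapsto m-k$ gives the left side. -/

namespace Complex

theorem hasSum_ascPochhammer_div_factorial_mul_pow (s : ℂ) {x : ℂ} (hx : ‖x‖ < 1) :
    HasSum (fun n : ℕ => (ascPochhammer ℂ n).eval s / n.factorial * x ^ n) ((1 - x) ^ s)⁻¹ := by
  have hx' : x ∈ Metric.eball (0 : ℂ) 1 := by
    rw [Metric.mem_eball, edist_zero_right, ← ofReal_norm]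
    exact ENNReal.ofReal_lt_one.mpr hx
  have H := (one_div_one_sub_cpow_hasFPowerSeriesOnBall_zero s).hasSum hx'
  simp only [zero_add, one_div, FormalMultilinearSeries.ofScalars_apply_eq, smul_eq_mul] at H
  refine H.congr_fun fun n => ?_
  rw [← Ring.multichoose_eq, ← Polynomial.ascPochhammer_smeval_eq_eval,
    ← Ring.factorial_nsmul_multichoose_eq_ascPochhammer, nsmul_eq_mul]
  have : (n.factorial : ℂ) ≠ 0 := mod_cast n.factorial_ne_zero
  field_simp

theorem hasSum_ascPochhammer_mul_pow_div (s : ℂ) {a b : ℝ} (hab : |b| < a) :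
    HasSum (fun n : ℕ => (ascPochhammer ℂ n).eval s / n.factorial * (b : ℂ) ^ n /
        ((a : ℂ) ^ n * (a : ℂ) ^ s)) (((a : ℂ) - b) ^ s)⁻¹ := by
  have ha : 0 < a := (abs_nonneg b).trans_lt hab
  have hx : ‖(b / a : ℂ)‖ < 1 := by
    rw [norm_div, norm_real, norm_real, Real.norm_eq_abs, Real.norm_eq_abs, abs_of_pos ha]
    exact (div_lt_one ha).mpr hab
  have ha0 : (a : ℂ) ≠ 0 := ofReal_ne_zero.mpr ha.ne'
  have hsplit : ((a : ℂ) - b) ^ s = (a : ℂ) ^ s * (1 - b / a) ^ s := by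
    have h1 : 0 ≤ 1 - b / a := sub_nonneg.mpr ((div_le_one ha).mpr ((le_abs_self b).trans hab.le))
    have h2 : ((a : ℂ) - b) = ((a * (1 - b / a) : ℝ) : ℂ) := by
      push_cast
      rw [mul_sub, mul_one, mul_div_cancel₀ _ ha0]
    rw [h2, ofReal_mul, mul_cpow_ofReal_nonneg ha.le h1]
    push_cast
    rfl
  rw [hsplit, mul_inv]
  refine ((hasSum_ascPochhammer_div_factorial_mul_pow s hx).mul_left ((a : ℂ) ^ s)⁻¹).congr_fun
    fun n => ?_
  rw [div_pow]
  field_simp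

end Complex

theorem Finset.sum_Icc_one_sub_reflect {M : Type*} [AddCommMonoid M] (f : ℕ → M) (m : ℕ) :
    ∑ k ∈ Finset.Icc 1 (m - 1), f (m - k) = ∑ k ∈ Finset.Icc 1 (m - 1), f k := by
  refine Finset.sum_nbij' (fun k => m - k) (fun k => m - k) ?_ ?_ ?_ ?_ (fun _ _ => rfl) <;>
    intro k hk <;> simp only [Finset.mem_Icc] at * <;> omega

theorem stmt6_general (z : ℝ) (hz : 1 ≤ z) (m : ℕ) (s : ℂ) :
    Summable (fun n : ℕ =>
      ‖((1 / (n.factorial : ℂ)) * ∑ k ∈ Finset.Icc 1 (m - 1), (k : ℂ) ^ n * (z : ℂ) ^ (-(k : ℤ))) *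
          (ascPochhammer ℂ n).eval s / ((m : ℂ) ^ n * (m : ℂ) ^ s)‖) ∧
    ∑ k ∈ Finset.Icc 1 (m - 1), (z : ℂ) ^ k / (k : ℂ) ^ s
      = (z : ℂ) ^ m *
          ∑' n : ℕ,
            ((1 / (n.factorial : ℂ)) * ∑ k ∈ Finset.Icc 1 (m - 1), (k : ℂ) ^ n * (z : ℂ) ^ (-(k : ℤ))) *
              (ascPochhammer ℂ n).eval s / ((m : ℂ) ^ n * (m : ℂ) ^ s) := by
  have hsum : HasSum (fun n : ℕ =>
      ((1 / (n.factorial : ℂ)) * ∑ k ∈ Finset.Icc 1 (m - 1), (k : ℂ) ^ n * (z : ℂ) ^ (-(k : ℤ))) *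
          (ascPochhammer ℂ n).eval s / ((m : ℂ) ^ n * (m : ℂ) ^ s))
      (∑ k ∈ Finset.Icc 1 (m - 1), (z : ℂ) ^ (-(k : ℤ)) * (((m : ℂ) - (k : ℕ)) ^ s)⁻¹) := by
    have hk : ∀ k ∈ Finset.Icc 1 (m - 1), |(k : ℝ)| < m := fun k hk => by
      rw [Finset.mem_Icc] at hk
      rw [Nat.abs_cast]
      exact_mod_cast (by omega : k < m)
    refine (hasSum_sum fun k hk' =>
      ((Complex.hasSum_ascPochhammer_mul_pow_div s (hk k hk')).mul_left _)).congr_fun fun n => ?_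
    rw [Finset.mul_sum, Finset.sum_mul, Finset.sum_div]
    refine Finset.sum_congr rfl fun k _ => ?_
    push_cast
    ring
  refine ⟨summable_norm_iff.mpr hsum.summable, ?_⟩
  have hz0 : (z : ℂ) ≠ 0 := Complex.ofReal_ne_zero.mpr (by linarith)
  rw [hsum.tsum_eq, Finset.mul_sum, ← Finset.sum_Icc_one_sub_reflect]
  refine Finset.sum_congr rfl fun k hk => ?_
  rw [Finset.mem_Icc] at hk
  have hzpow : (z : ℂ) ^ m * (z : ℂ) ^ (-(k : ℤ)) = (z : ℂ) ^ (m - k) := by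
    rw [← zpow_natCast, ← zpow_natCast, ← zpow_add₀ hz0]
    congr 1
    omega
  rw [← mul_assoc, hzpow, Nat.cast_sub (by omega : k ≤ m), div_eq_mul_inv]

theorem stmt6 (z : ℝ) (hz : 1 ≤ z) (m : ℕ) (hm : 2 ≤ m) (s : ℂ) (hs : 0 < s.re) :
    Summable (fun n : ℕ =>
      ‖((1 / (n.factorial : ℂ)) * ∑ k ∈ Finset.Icc 1 (m - 1), (k : ℂ) ^ n * (z : ℂ) ^ (-(k : ℤ))) *
          (ascPochhammer ℂ n).eval s / ((m : ℂ) ^ n * (m : ℂ) ^ s)‖) ∧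
    ∑ k ∈ Finset.Icc 1 (m - 1), (z : ℂ) ^ k / (k : ℂ) ^ s
      = (z : ℂ) ^ m *
          ∑' n : ℕ,
            ((1 / (n.factorial : ℂ)) * ∑ k ∈ Finset.Icc 1 (m - 1), (k : ℂ) ^ n * (z : ℂ) ^ (-(k : ℤ))) *
              (ascPochhammer ℂ n).eval s / ((m : ℂ) ^ n * (m : ℂ) ^ s) :=
  stmt6_general z hz m s
end

section
/- Let m ∈ ℕ with m ≥ 2 and let s ∈ ℂ with Re s > 0. Then Σ_{n=1}^{m−1} n^{−s} = m^{−s} [ (m−1) + Σ_{k=1}^∞ ( (B_{k+1}(m−1) − B_{k+1} + (k+1)(m−1)^k)/(k+1)! ) (s)_k / m^k ], where the series over k converges absolutely, n^{−s} = exp(−s log n), and m^{−s} = exp(−s log m). -/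
/-!
Writing `n = m - j` gives `n^{-s} = m^{-s} (1 - j/m)^{-s}`, and the binomial series
`(1 - z)^{-s} = ∑ (s)_k z^k / k!` converges absolutely for `|z| < 1`. Summing over the finitely
many `j` turns the coefficient of `(s)_k / k!` into the power sum `∑_{j=1}^{m-1} (j/m)^k`, which
is `m - 1` for `k = 0` and is given by Faulhaber's formula in terms of Bernoulli polynomials for
`k ≥ 1`.
-/

open Finset
open scoped Nat BigOperators

theorem Ring.choose_add_sub_one_eq_ascPochhammer_div {K : Type*} [Field K] [CharZero K] (a : K)
    (k : ℕ) : Ring.choose (a + k - 1) k = (ascPochhammer K k).eval a / k ! := by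
  rw [Ring.choose_eq_smul, Polynomial.descPochhammer_smeval_eq_ascPochhammer,
    show a + k - 1 - k + 1 = a by ring, Polynomial.ascPochhammer_smeval_eq_eval, smul_eq_mul,
    inv_mul_eq_div]

theorem hasSum_ascPochhammer_div_factorial_mul_pow (s : ℂ) {z : ℂ} (hz : ‖z‖ < 1) :
    HasSum (fun k ↦ (ascPochhammer ℂ k).eval s / k ! * z ^ k) ((1 - z) ^ (-s)) := by
  have h := (Complex.one_div_one_sub_cpow_hasFPowerSeriesOnBall_zero s).hasSum
    (y := z) (by simpa [← ofReal_norm, ENNReal.ofReal_lt_one] using hz)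
  simpa [FormalMultilinearSeries.ofScalars_apply_eq, Ring.choose_add_sub_one_eq_ascPochhammer_div,
    Complex.cpow_neg, mul_comm] using h

theorem summable_norm_ascPochhammer_div_factorial_mul_pow (s : ℂ) {z : ℂ} (hz : ‖z‖ < 1) :
    Summable (fun k ↦ ‖(ascPochhammer ℂ k).eval s / k ! * z ^ k‖) := by
  have hz' : ‖z‖ₑ < 1 := by simpa [← ofReal_norm, ENNReal.ofReal_lt_one] using hz
  have h := (FormalMultilinearSeries.ofScalars ℂ fun n ↦ Ring.choose (s + n - 1) n)
    |>.summable_norm_apply (x := z) (lt_of_lt_of_le (by simpa using hz')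
      (Complex.one_div_one_sub_cpow_hasFPowerSeriesOnBall_zero s).r_le)
  simpa [FormalMultilinearSeries.ofScalars_apply_eq, Ring.choose_add_sub_one_eq_ascPochhammer_div,
    mul_comm] using h

theorem natCast_mul_sum_Icc_pow_eq_bernoulli (N k : ℕ) :
    ((k : ℂ) + 2) * ∑ j ∈ Icc 1 N, (j : ℂ) ^ (k + 1) =
      Polynomial.aeval (N : ℂ) (Polynomial.bernoulli (k + 2)) - ((bernoulli (k + 2) : ℚ) : ℂ)
        + ((k : ℂ) + 2) * (N : ℂ) ^ (k + 1) := by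
  have faulhaber : ((k : ℂ) + 2) * ∑ j ∈ range N, (j : ℂ) ^ (k + 1) =
      (((Polynomial.bernoulli (k + 2)).eval (N : ℚ) : ℚ) : ℂ) - ((bernoulli (k + 2) : ℚ) : ℂ) := by
    exact_mod_cast congrArg (fun q : ℚ ↦ (q : ℂ))
      (Polynomial.sum_range_pow_eq_bernoulli_sub N (k + 1))
  have hIcc : ∑ j ∈ Icc 1 N, (j : ℂ) ^ (k + 1) =
      ∑ j ∈ range N, (j : ℂ) ^ (k + 1) + (N : ℂ) ^ (k + 1) := by
    rw [← sum_range_succ, range_eq_Ico, sum_eq_sum_Ico_succ_bot (Nat.succ_pos N), Nat.cast_zero,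
      zero_pow (Nat.succ_ne_zero k), zero_add]
    rfl
  rw [hIcc, show (N : ℂ) = algebraMap ℚ ℂ N by simp,
    Polynomial.aeval_algebraMap_apply_eq_algebraMap_eval]
  simp only [eq_ratCast, Rat.cast_natCast]
  linear_combination faulhaber

theorem natCast_sub_cpow {m j : ℕ} (hm : 0 < m) (hj : j ≤ m) (s : ℂ) :
    ((m - j : ℕ) : ℂ) ^ s = (m : ℂ) ^ s * (1 - j / m) ^ s := by
  have hmR : (0 : ℝ) < m := by exact_mod_cast hm
  have h1 : (0 : ℝ) ≤ 1 - j / m := by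
    rw [sub_nonneg, div_le_one hmR]; exact_mod_cast hj
  have hmul := Complex.mul_cpow_ofReal_nonneg hmR.le h1 s
  push_cast at hmul
  rw [← hmul, Nat.cast_sub hj, mul_one_sub, mul_div_cancel₀ _ (by exact_mod_cast hm.ne')]

theorem sum_Icc_natCast_cpow_eq (m : ℕ) (hm : 0 < m) (s : ℂ) :
    ∑ n ∈ Icc 1 (m - 1), (n : ℂ) ^ s = (m : ℂ) ^ s * ∑ j ∈ Icc 1 (m - 1), (1 - j / m : ℂ) ^ s := by
  rw [mul_sum]
  refine sum_nbij' (m - ·) (m - ·) ?_ ?_ ?_ ?_ ?_ <;> intro j hj <;>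
    simp only [mem_Icc] at hj ⊢
  any_goals omega
  rw [← natCast_sub_cpow hm (Nat.sub_le m j), Nat.sub_sub_self (by omega)]

theorem hasSum_ascPochhammer_mul_sum_pow (s : ℂ) {ι : Type*} (t : Finset ι) {z : ι → ℂ}
    (hz : ∀ i ∈ t, ‖z i‖ < 1) :
    HasSum (fun k ↦ (ascPochhammer ℂ k).eval s / k ! * ∑ i ∈ t, z i ^ k)
      (∑ i ∈ t, (1 - z i) ^ (-s)) := by
  simp_rw [mul_sum]
  exact hasSum_sum fun i hi ↦ hasSum_ascPochhammer_div_factorial_mul_pow s (hz i hi)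

theorem summable_norm_ascPochhammer_mul_sum_pow (s : ℂ) {ι : Type*} (t : Finset ι) {z : ι → ℂ}
    (hz : ∀ i ∈ t, ‖z i‖ < 1) :
    Summable (fun k ↦ ‖(ascPochhammer ℂ k).eval s / k ! * ∑ i ∈ t, z i ^ k‖) := by
  refine Summable.of_nonneg_of_le (fun _ ↦ norm_nonneg _) (fun k ↦ ?_)
    (summable_sum fun i hi ↦ summable_norm_ascPochhammer_div_factorial_mul_pow s (hz i hi))
  rw [mul_sum]
  exact norm_sum_le _ _

theorem bernoulli_coeff_eq_ascPochhammer_mul_sum_pow {m : ℕ} (hm : 1 ≤ m) (s : ℂ) (k : ℕ) :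
    ((Polynomial.aeval ((m : ℂ) - 1) (Polynomial.bernoulli (k + 2))
        - ((bernoulli (k + 2) : ℚ) : ℂ)
        + ((k : ℂ) + 2) * ((m : ℂ) - 1) ^ (k + 1)) / ((k + 2).factorial : ℂ)) *
      (ascPochhammer ℂ (k + 1)).eval s / (m : ℂ) ^ (k + 1) =
    (ascPochhammer ℂ (k + 1)).eval s / (k + 1) ! *
      ∑ j ∈ Icc 1 (m - 1), ((j : ℂ) / m) ^ (k + 1) := by
  have hm' : (m : ℂ) ≠ 0 := by exact_mod_cast (by omega : m ≠ 0)
  have hk : (k : ℂ) + 2 ≠ 0 := by exact_mod_cast (by omega : k + 2 ≠ 0)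
  have hfac : ((k + 1) ! : ℂ) ≠ 0 := by exact_mod_cast (k + 1).factorial_ne_zero
  rw [← Nat.cast_pred hm, ← natCast_mul_sum_Icc_pow_eq_bernoulli, Nat.factorial_succ]
  simp_rw [div_pow, ← sum_div]
  push_cast
  rw [show (k : ℂ) + 1 + 1 = k + 2 by ring]
  field_simp

theorem stmt13_general (m : ℕ) (hm : 2 ≤ m) (s : ℂ) :
    Summable (fun k : ℕ =>
      ‖((Polynomial.aeval ((m : ℂ) - 1) (Polynomial.bernoulli (k + 2))
            - ((bernoulli (k + 2) : ℚ) : ℂ)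
            + ((k : ℂ) + 2) * ((m : ℂ) - 1) ^ (k + 1)) / ((k + 2).factorial : ℂ)) *
          (ascPochhammer ℂ (k + 1)).eval s / (m : ℂ) ^ (k + 1)‖) ∧
    ∑ n ∈ Finset.Icc 1 (m - 1), (n : ℂ) ^ (-s)
      = (m : ℂ) ^ (-s) *
          (((m : ℂ) - 1)
            + ∑' k : ℕ,
                ((Polynomial.aeval ((m : ℂ) - 1) (Polynomial.bernoulli (k + 2))
                      - ((bernoulli (k + 2) : ℚ) : ℂ)
                      + ((k : ℂ) + 2) * ((m : ℂ) - 1) ^ (k + 1)) / ((k + 2).factorial : ℂ)) *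
                  (ascPochhammer ℂ (k + 1)).eval s / (m : ℂ) ^ (k + 1)) := by
  have hz : ∀ j ∈ Icc 1 (m - 1), ‖(j : ℂ) / m‖ < 1 := fun j hj ↦ by
    rw [mem_Icc] at hj
    rw [norm_div, Complex.norm_natCast, Complex.norm_natCast,
      div_lt_one (by exact_mod_cast (by omega : 0 < m))]
    exact_mod_cast (by omega : j < m)
  have hzero : (ascPochhammer ℂ 0).eval s / (0 : ℕ) ! * ∑ j ∈ Icc 1 (m - 1), ((j : ℂ) / m) ^ 0 =
      (m - 1 : ℕ) := by
    simp
  simp only [bernoulli_coeff_eq_ascPochhammer_mul_sum_pow (by omega : 1 ≤ m)]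
  have hsum := hasSum_ascPochhammer_mul_sum_pow s _ hz
  rw [← hasSum_nat_add_iff' 1, sum_range_one, hzero] at hsum
  refine ⟨(summable_nat_add_iff 1).2 (summable_norm_ascPochhammer_mul_sum_pow s _ hz), ?_⟩
  rw [hsum.tsum_eq, sum_Icc_natCast_cpow_eq m (by omega), Nat.cast_pred (by omega)]
  ring

theorem stmt13 (m : ℕ) (hm : 2 ≤ m) (s : ℂ) (hs : 0 < s.re) :
    Summable (fun k : ℕ =>
      ‖((Polynomial.aeval ((m : ℂ) - 1) (Polynomial.bernoulli (k + 2))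
            - ((bernoulli (k + 2) : ℚ) : ℂ)
            + ((k : ℂ) + 2) * ((m : ℂ) - 1) ^ (k + 1)) / ((k + 2).factorial : ℂ)) *
          (ascPochhammer ℂ (k + 1)).eval s / (m : ℂ) ^ (k + 1)‖) ∧
    ∑ n ∈ Finset.Icc 1 (m - 1), (n : ℂ) ^ (-s)
      = (m : ℂ) ^ (-s) *
          (((m : ℂ) - 1)
            + ∑' k : ℕ,
                ((Polynomial.aeval ((m : ℂ) - 1) (Polynomial.bernoulli (k + 2))
                      - ((bernoulli (k + 2) : ℚ) : ℂ)
                      + ((k : ℂ) + 2) * ((m : ℂ) - 1) ^ (k + 1)) / ((k + 2).factorial : ℂ)) *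
                  (ascPochhammer ℂ (k + 1)).eval s / (m : ℂ) ^ (k + 1)) :=
  stmt13_general m hm s
end
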